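/- Live roles cannot appear from nowhere: if an annotated global type (C; G) reduces in one step with label α to (C'; G'), p ∈ roles(G'), and α is not the crash of p, then p ∈ roles(G). -/
import Mathlib


/-! Roles, base types and message labels. -/

abbrev Role : Type := ℕ
abbrev Base : Type := ℕ

/-- Message labels, with a distinguished `crash` pseudo-label. -/
inductive Label where
  | crash : Label
  | name : ℕ → Label
deriving DecidableEq
/-! Global types with crash annotations and runtime constructs. -/

mutual
inductive GType where
  /-- `comm p q qc bs`: a transmission `p → q† : bs`, where `qc` records whether the
  receiver `q` carries a crash annotation. -/
  | comm : Role → Role → Bool → GBranches → GType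
  /-- `transit p pc q j bs`: a transmission en route `p† ⇝ q : j bs`, with selected
  label `j`; `pc` records whether the sender carries a crash annotation. -/
  | transit : Role → Bool → Role → Label → GBranches → GType
  | mu : GType → GType
  | var : ℕ → GType
  | endg : GType
inductive GBranches where
  | nil : GBranches
  | cons : Label → Base → GType → GBranches → GBranches
end

mutual
/-- Active (non-crash-annotated) roles of a global type. -/
def GType.roles : GType → List Role
  | .comm p q qc bs => p :: ((if qc then [] else [q]) ++ GBranches.roles bs)
  | .transit _ _ q _ bs => q :: GBranches.roles bs
  | .mu G => GType.roles G
  | .var _ => []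
  | .endg => []
def GBranches.roles : GBranches → List Role
  | .nil => []
  | .cons _ _ G bs => GType.roles G ++ GBranches.roles bs
end

mutual
/-- Crashed (crash-annotated) roles of a global type.  A crashed sender of an en route
transmission is not counted unless it appears crashed in a continuation. -/
def GType.crashed : GType → List Role
  | .comm _ q qc bs => (if qc then [q] else []) ++ GBranches.crashed bs
  | .transit _ _ _ _ bs => GBranches.crashed bs
  | .mu G => GType.crashed G
  | .var _ => []
  | .endg => []
def GBranches.crashed : GBranches → List Role
  | .nil => []
  | .cons _ _ G bs => GType.crashed G ++ GBranches.crashed bs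
end

/-- Membership of a branch `l(B).G` in a global branch list. -/
inductive GBMem : Label → Base → GType → GBranches → Prop where
  | head {l B G bs} : GBMem l B G (.cons l B G bs)
  | tail {l B G l' B' G' bs} : GBMem l B G bs → GBMem l B G (.cons l' B' G' bs)

def GHasLabel (l : Label) (bs : GBranches) : Prop := ∃ B G, GBMem l B G bs

mutual
def GType.ClosedUnder : ℕ → GType → Prop
  | k, .comm _ _ _ bs => GBranches.ClosedUnder k bs
  | k, .transit _ _ _ _ bs => GBranches.ClosedUnder k bs
  | k, .mu G => GType.ClosedUnder (k+1) G
  | k, .var n => n < k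
  | _, .endg => True
def GBranches.ClosedUnder : ℕ → GBranches → Prop
  | _, .nil => True
  | k, .cons _ _ G bs => GType.ClosedUnder k G ∧ GBranches.ClosedUnder k bs
end

mutual
/-- Removal of a live role `r` from a global type (a partial operation, given as a
relation): `RemoveRole G r G'` means `G ∖ r = G'`. -/
inductive RemoveRole : GType → Role → GType → Prop where
  /-- Removing the (live) sender of a transmission with a crash-handling branch
  produces an en route crash pseudo-message. -/
  | commSender {p q B Gj bs bs'} :
      GBMem Label.crash B Gj bs → RemoveRoleB bs p bs' →
      RemoveRole (.comm p q false bs) p (.transit p true q Label.crash bs')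
  /-- Removing the (live) receiver of a transmission annotates it as crashed. -/
  | commRecv {p q bs bs'} :
      p ≠ q → RemoveRoleB bs q bs' →
      RemoveRole (.comm p q false bs) q (.comm p q true bs')
  | commOther {p q r bs bs'} :
      r ≠ p → r ≠ q → RemoveRoleB bs r bs' →
      RemoveRole (.comm p q false bs) r (.comm p q false bs')
  /-- Removing the sender of a transmission towards a crashed receiver (with a
  crash branch `j`) prunes the prefix. -/
  | commCrashedSender {p q B Gj bs G'} :
      GBMem Label.crash B Gj bs → RemoveRole Gj p G' →
      RemoveRole (.comm p q true bs) p G'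
  | commCrashedOther {p q r bs bs'} :
      r ≠ p → r ≠ q → RemoveRoleB bs r bs' →
      RemoveRole (.comm p q true bs) r (.comm p q true bs')
  /-- Removing the (live) sender of an en route transmission keeps the selected
  label `j`. -/
  | transitSender {p q j bs bs'} :
      RemoveRoleB bs p bs' →
      RemoveRole (.transit p false q j bs) p (.transit p true q j bs')
  /-- Removing the receiver of an en route transmission prunes the prefix. -/
  | transitRecv {p pc q j B Gj bs G'} :
      GBMem j B Gj bs → RemoveRole Gj q G' →
      RemoveRole (.transit p pc q j bs) q G'
  | transitOther {p pc q j r bs bs'} :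
      r ≠ p → r ≠ q → RemoveRoleB bs r bs' →
      RemoveRole (.transit p pc q j bs) r (.transit p pc q j bs')
  | muKeep {G r G'} :
      RemoveRole G r G' →
      (¬ GType.ClosedUnder 0 (GType.mu G) ∨ GType.roles G' ≠ []) →
      RemoveRole (.mu G) r (.mu G')
  | muEnd {G r G'} :
      RemoveRole G r G' →
      GType.ClosedUnder 0 (GType.mu G) → GType.roles G' = [] →
      RemoveRole (.mu G) r .endg
  | var {n r} : RemoveRole (.var n) r (.var n)
  | endg {r} : RemoveRole .endg r .endg
inductive RemoveRoleB : GBranches → Role → GBranches → Prop where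
  | nil {r} : RemoveRoleB .nil r .nil
  | cons {l B G G' r bs bs'} :
      RemoveRole G r G' → RemoveRoleB bs r bs' →
      RemoveRoleB (.cons l B G bs) r (.cons l B G' bs')
end
/-! Transition labels. -/

inductive GLabel where
  | send : Role → Role → Label → Base → GLabel   -- p sends l(B) to q
  | recv : Role → Role → Label → Base → GLabel   -- p receives l(B) from q
  | crash : Role → GLabel                        -- p crashes
  | detect : Role → Role → GLabel                -- p detects the crash of q
deriving DecidableEq

/-- The subject of a transition label. -/
def GLabel.subject : GLabel → Role
  | .send p _ _ _ => p
  | .recv p _ _ _ => p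
  | .crash p => p
  | .detect p _ => p
/-! The labelled reduction semantics of annotated global types. -/

mutual
def GType.subst (U : GType) : ℕ → GType → GType
  | n, .comm p q qc bs => .comm p q qc (GBranches.subst U n bs)
  | n, .transit p pc q j bs => .transit p pc q j (GBranches.subst U n bs)
  | n, .mu G => .mu (GType.subst U (n+1) G)
  | n, .var m => if m = n then U else .var m
  | _, .endg => .endg
def GBranches.subst (U : GType) : ℕ → GBranches → GBranches
  | _, .nil => .nil
  | n, .cons l B G bs => .cons l B (GType.subst U n G) (GBranches.subst U n bs)
end

mutual
/-- Labelled reduction of annotated global types `(C; G) →α (C'; G')`,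
parameterised by a fixed set `R` of reliable roles. -/
inductive GStep (R : Set Role) : Set Role → GType → GLabel → Set Role → GType → Prop where
  /-- A live, unreliable role may crash (not under a top-level μ). -/
  | crash {C p G G'} :
      p ∉ R → p ∈ GType.roles G → (∀ G₀, G ≠ GType.mu G₀) → RemoveRole G p G' →
      GStep R C G (.crash p) (C ∪ {p}) G'
  | recStep {C C' G α G'} :
      GStep R C (GType.subst (.mu G) 0 G) α C' G' →
      GStep R C (.mu G) α C' G'
  /-- Sending a (non-crash) message turns a transmission into one en route. -/
  | out {C p q j B Gj bs} :
      GBMem j B Gj bs → j ≠ Label.crash →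
      GStep R C (.comm p q false bs) (.send p q j B) C (.transit p false q j bs)
  /-- Receiving a (non-crash) message en route. -/
  | inp {C p pc q j B Gj bs} :
      GBMem j B Gj bs → j ≠ Label.crash →
      GStep R C (.transit p pc q j bs) (.recv q p j B) C Gj
  /-- Crash detection: receiving the crash pseudo-message from a crashed sender. -/
  | crashDetect {C p q B Gj bs} :
      GBMem Label.crash B Gj bs →
      GStep R C (.transit p true q Label.crash bs) (.detect q p) C Gj
  /-- Orphaning a message sent to a crashed receiver. -/
  | orphan {C p q j B Gj bs} :
      GBMem j B Gj bs → j ≠ Label.crash →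
      GStep R C (.comm p q true bs) (.send p q j B) C Gj
  /-- Reduction under a transmission prefix, uniformly in all continuations. -/
  | ctx {C C' p q qc bs bs' α} :
      GStepB R C bs α C' bs' → GLabel.subject α ≠ p → GLabel.subject α ≠ q →
      GStep R C (.comm p q qc bs) α C' (.comm p q qc bs')
  /-- Reduction under an en route prefix, uniformly in all continuations. -/
  | ctx' {C C' p pc q j bs bs' α} :
      GStepB R C bs α C' bs' → GLabel.subject α ≠ q →
      GStep R C (.transit p pc q j bs) α C' (.transit p pc q j bs')
inductive GStepB (R : Set Role) : Set Role → GBranches → GLabel → Set Role → GBranches → Prop where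
  | nil {C α} : GStepB R C .nil α C .nil
  | cons {C C' l B G G' bs bs' α} :
      GStep R C G α C' G' → GStepB R C bs α C' bs' →
      GStepB R C (.cons l B G bs) α C' (.cons l B G' bs')
end

/-- `(C; G)` is well-annotated with respect to the reliable roles `R`. -/
def WellAnnotated (R C : Set Role) (G : GType) : Prop :=
  (∀ p ∈ GType.crashed G, p ∉ R) ∧
  (∀ p ∈ GType.crashed G, p ∈ C) ∧
  (∀ p ∈ GType.roles G, p ∉ GType.crashed G)

def GType.IsMuVarChain : GType → Prop
  | .var _ => True
  | .mu G => GType.IsMuVarChain G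
  | _ => False

mutual
/-- Well-guardedness (contractiveness) of recursion in global types. -/
def GType.Guarded : GType → Prop
  | .comm _ _ _ bs => GBranches.Guarded bs
  | .transit _ _ _ _ bs => GBranches.Guarded bs
  | .mu G => ¬ GType.IsMuVarChain G ∧ GType.Guarded G
  | .var _ => True
  | .endg => True
def GBranches.Guarded : GBranches → Prop
  | .nil => True
  | .cons _ _ G bs => GType.Guarded G ∧ GBranches.Guarded bs
end

def GType.muDepth : GType → ℕ
  | .mu G => GType.muDepth G + 1
  | _ => 0

def GType.unfoldN : ℕ → GType → GType
  | 0, G => G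
  | n+1, .mu G => GType.unfoldN n (GType.subst (.mu G) 0 G)
  | _+1, G => G

/-- Repeated unfolding of top-level recursion in global types:
`unfold (μt.G) = unfold (G[μt.G/t])`, `unfold G = G` otherwise. -/
def GType.unfold (G : GType) : GType := GType.unfoldN G.muDepth G
mutual
theorem roles_subst (U : GType) (q : Role) :
    ∀ n G, q ∈ GType.roles (GType.subst U n G) → q ∈ GType.roles G ∨ q ∈ GType.roles U
  | n, .comm a b bc bs => by
    simp only [GType.subst, GType.roles, List.mem_cons, List.mem_append]
    intro h
    rcases h with h | h | h
    · tauto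
    · tauto
    · rcases rolesB_subst U q n bs h with h | h <;> tauto
  | n, .transit a ac b j bs => by
    simp only [GType.subst, GType.roles, List.mem_cons]
    intro h
    rcases h with h | h
    · tauto
    · rcases rolesB_subst U q n bs h with h | h <;> tauto
  | n, .mu G => roles_subst U q (n+1) G
  | n, .var m => by
    simp only [GType.subst]
    split <;> simp [GType.roles]
  | _, .endg => fun h => Or.inl h
theorem rolesB_subst (U : GType) (q : Role) :
    ∀ n bs, q ∈ GBranches.roles (GBranches.subst U n bs) →
      q ∈ GBranches.roles bs ∨ q ∈ GType.roles U
  | _, .nil => fun h => Or.inl h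
  | n, .cons l B G bs => by
    simp only [GBranches.subst, GBranches.roles, List.mem_append]
    intro h
    rcases h with h | h
    · rcases roles_subst U q n G h with h | h <;> tauto
    · rcases rolesB_subst U q n bs h with h | h <;> tauto
end

theorem roles_gbmem {l B Gj bs} (h : GBMem l B Gj bs) :
    ∀ q, q ∈ GType.roles Gj → q ∈ GBranches.roles bs := by
  induction h with
  | head => intro q hq; simp [GBranches.roles, hq]
  | tail _ ih => intro q hq; simp [GBranches.roles]; exact Or.inr (ih q hq)

theorem roles_remove {G r G'} (h : RemoveRole G r G') :
    ∀ q, q ∈ GType.roles G' → q ∈ GType.roles G := by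
  induction h using RemoveRole.rec
    (motive_2 := fun bs r bs' _ =>
      ∀ q, q ∈ GBranches.roles bs' → q ∈ GBranches.roles bs) with
  | commSender hm hb ih =>
    intro x hx
    simp [GType.roles] at hx ⊢
    rcases hx with h | h
    · tauto
    · exact Or.inr (Or.inr (ih x h))
  | commRecv hne hb ih =>
    intro x hx
    simp [GType.roles] at hx ⊢
    rcases hx with h | h
    · tauto
    · exact Or.inr (Or.inr (ih x h))
  | commOther h1 h2 hb ih =>
    intro x hx
    simp [GType.roles] at hx ⊢
    rcases hx with h | h | h
    · tauto
    · tauto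
    · exact Or.inr (Or.inr (ih x h))
  | commCrashedSender hm hr ih =>
    intro x hx
    simp [GType.roles]
    exact Or.inr (roles_gbmem hm x (ih x hx))
  | commCrashedOther h1 h2 hb ih =>
    intro x hx
    simp [GType.roles] at hx ⊢
    rcases hx with h | h
    · tauto
    · exact Or.inr (ih x h)
  | transitSender hb ih =>
    intro x hx
    simp [GType.roles] at hx ⊢
    rcases hx with h | h
    · tauto
    · exact Or.inr (ih x h)
  | transitRecv hm hr ih =>
    intro x hx
    simp [GType.roles]
    exact Or.inr (roles_gbmem hm x (ih x hx))
  | transitOther h1 h2 hb ih =>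
    intro x hx
    simp [GType.roles] at hx ⊢
    rcases hx with h | h
    · tauto
    · exact Or.inr (ih x h)
  | muKeep hr h0 ih => exact ih
  | muEnd hr h0 h1 ih => intro x hx; simp [GType.roles] at hx
  | var => intros; assumption
  | endg => intros; assumption
  | nil => intros; assumption
  | cons hg hb ih1 ih2 =>
    intros
    rename_i x hx
    simp only [GBranches.roles, List.mem_append] at hx ⊢
    rcases hx with h | h
    · exact Or.inl (ih1 x h)
    · exact Or.inr (ih2 x h)

theorem gstep_roles {R C G α C' G'} (h : GStep R C G α C' G') :
    ∀ q, α ≠ GLabel.crash q → q ∈ GType.roles G' → q ∈ GType.roles G := by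
  induction h using GStep.rec
    (motive_2 := fun bs α C' bs' _ =>
      ∀ q, α ≠ GLabel.crash q → q ∈ GBranches.roles bs' → q ∈ GBranches.roles bs) with
  | crash h1 h2 h3 hr => exact fun x _ hx => roles_remove hr x hx
  | recStep hs ih =>
    intro x hα hx
    rcases roles_subst _ x 0 _ (ih x hα hx) with h | h
    · exact h
    · exact h
  | out hm hj =>
    intro x _ hx
    simp [GType.roles] at hx ⊢
    tauto
  | inp hm hj =>
    intro x _ hx
    simp [GType.roles]
    exact Or.inr (roles_gbmem hm x hx)
  | crashDetect hm =>
    intro x _ hx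
    simp [GType.roles]
    exact Or.inr (roles_gbmem hm x hx)
  | orphan hm hj =>
    intro x _ hx
    simp [GType.roles]
    exact Or.inr (roles_gbmem hm x hx)
  | ctx hb h1 h2 ih =>
    intro x hα hx
    simp only [GType.roles, List.mem_cons, List.mem_append] at hx ⊢
    rcases hx with h | h | h
    · tauto
    · tauto
    · exact Or.inr (Or.inr (ih x hα h))
  | ctx' hb h1 ih =>
    intro x hα hx
    simp only [GType.roles, List.mem_cons] at hx ⊢
    rcases hx with h | h
    · tauto
    · exact Or.inr (ih x hα h)
  | nil => intros; assumption
  | cons hg hb ih1 ih2 =>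
    intros
    rename_i x hα hx
    simp only [GBranches.roles, List.mem_append] at hx ⊢
    rcases hx with h | h
    · exact Or.inl (ih1 x hα h)
    · exact Or.inr (ih2 x hα h)

/-- Live roles cannot appear from nowhere: a role active after a step which is
not its own crash was already active before the step. -/
theorem no_sudden_life (R C C' : Set Role) (G G' : GType) (α : GLabel) (p : Role)
    (h : GStep R C G α C' G') (hp : p ∈ GType.roles G')
    (hα : α ≠ GLabel.crash p) :
    p ∈ GType.roles G :=
  gstep_roles h p hα hp
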